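/- For any compact [α₋,α₊] ⊂ (0,1) there is a constant C such that for all α ∈ [α₋,α₊] and z ∈ (0,1]: 0 ≤ Σ_{r=1}^{∞} z_r'(z) ≤ C·z^{−α}, where z_r' = d/dz E_α^{−r}(z). -/

import Mathlib

/-- Left branch of the LSV (Pomeau–Manneville type) map. -/
noncomputable def Ea (α x : ℝ) : ℝ := x * (1 + 2 ^ α * x ^ α)

/-!
Write `w j = Z j z`, `c = α 2 ^ α`, `u = z ^ α`. By the inverse function theorem,
`deriv (Z (r + 1)) z = ∏_{j ≤ r} Ea'(w (j + 1))⁻¹`. Bernoulli's inequality `(1 + s) ^ α ≤ 1 + α s`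
makes `w j ^ (-α)` grow by at most `c` per step, so `w j ^ α ≥ u / a j` with `a j = 1 + c j u`;
since `α + 1 ≥ 2 α` this gives `Ea'(w j) ≥ 1 + 2 c u / a j = a (j + 2) / a j`. The product then
telescopes to at most `a 1 a 2 / (a (r + 2) a (r + 3))`, and the sum of these telescopes to at most
`a 1 / (c u) = 1 + 1 / (c u) ≤ 3 / (αm u)`.
-/

open Real Filter Finset

/-- An odd extension of `Ea` to `ℝ`: it is an order isomorphism of `ℝ`, so its inverse provides a
continuous inverse branch of `Ea` on `(0, ∞)`. -/
noncomputable def EaOdd (α x : ℝ) : ℝ := x * (1 + 2 ^ α * |x| ^ α)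

noncomputable def Ea' (α x : ℝ) : ℝ := 1 + (α + 1) * 2 ^ α * x ^ α

lemma Ea'_pos {α x : ℝ} (hα : 0 ≤ α) (hx : 0 < x) : 0 < Ea' α x := by
  have := rpow_pos_of_pos hx α
  unfold Ea'
  positivity

namespace EaOdd

variable {α : ℝ}

lemma eq_Ea {x : ℝ} (hx : 0 ≤ x) : EaOdd α x = Ea α x := by
  rw [EaOdd, Ea, abs_of_nonneg hx]

lemma neg (x : ℝ) : EaOdd α (-x) = -EaOdd α x := by
  rw [EaOdd, EaOdd, abs_neg, neg_mul]

lemma self_le {x : ℝ} (hx : 0 ≤ x) : x ≤ EaOdd α x :=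
  le_mul_of_one_le_right hx (le_add_of_nonneg_right (by positivity))

lemma strictMono (hα : 0 ≤ α) : StrictMono (EaOdd α) := by
  refine strictMono_of_odd_strictMonoOn_nonneg neg fun x hx y hy hxy => ?_
  rw [eq_Ea hx, eq_Ea hy]
  have hpow : x ^ α ≤ y ^ α := rpow_le_rpow hx hxy.le hα
  have hx' : 0 ≤ x ^ α := rpow_nonneg hx α
  exact mul_lt_mul hxy (by gcongr) (by positivity) (hx.trans_lt hxy).le

lemma continuous (hα : 0 ≤ α) : Continuous (EaOdd α) := by
  unfold EaOdd
  have := continuous_rpow_const hα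
  fun_prop

lemma surjective (hα : 0 ≤ α) : Function.Surjective (EaOdd α) := by
  refine (continuous hα).surjective ?_ ?_
  · refine tendsto_atTop_mono' _ ?_ tendsto_id
    filter_upwards [eventually_ge_atTop 0] with x hx using self_le hx
  · refine tendsto_atBot_mono' _ ?_ tendsto_id
    filter_upwards [eventually_le_atBot 0] with x hx
    simpa [neg] using self_le (α := α) (neg_nonneg.2 hx)

noncomputable def orderIso (hα : 0 ≤ α) : ℝ ≃o ℝ :=
  StrictMono.orderIsoOfSurjective _ (strictMono hα) (surjective hα)

lemma hasDerivAt {x : ℝ} (hx : 0 < x) : HasDerivAt (EaOdd α) (Ea' α x) x := by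
  have h := (hasDerivAt_id' x).add
    ((hasDerivAt_rpow_const (p := α + 1) (Or.inl hx.ne')).const_mul (2 ^ α))
  refine (h.congr_deriv (by rw [Ea', add_sub_cancel_right]; ring)).congr_of_eventuallyEq ?_
  filter_upwards [Ioi_mem_nhds hx] with y hy
  rw [EaOdd, abs_of_pos hy, Pi.add_apply, rpow_add_one hy.ne']
  ring

lemma hasDerivAt_orderIso_symm (hα : 0 ≤ α) {y : ℝ} (hy : 0 < y) :
    HasDerivAt (orderIso hα).symm (Ea' α ((orderIso hα).symm y))⁻¹ y := by
  set g := (orderIso hα).symm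
  have hgy : 0 < g y := by
    rw [← (orderIso hα).lt_iff_lt, OrderIso.apply_symm_apply]
    simpa [orderIso, EaOdd] using hy
  exact .of_local_left_inverse g.continuous.continuousAt (hasDerivAt hgy) (Ea'_pos hα hgy).ne'
    (.of_forall fun y => (orderIso hα).apply_symm_apply y)

end EaOdd

lemma hasDerivAt_Ea_inverse_iterate {α : ℝ} (hα : 0 ≤ α) {Z : ℕ → ℝ → ℝ}
    (hZ0 : ∀ x ∈ Set.Ioi (0:ℝ), Z 0 x = x)
    (hZ : ∀ r : ℕ, ∀ x ∈ Set.Ioi (0:ℝ), Ea α (Z (r + 1) x) = Z r x ∧ 0 < Z (r + 1) x)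
    {z : ℝ} (hz : 0 < z) (r : ℕ) :
    HasDerivAt (Z r) (∏ j ∈ range r, (Ea' α (Z (j + 1) z))⁻¹) z := by
  set g := (EaOdd.orderIso hα).symm
  have hZg : ∀ r, ∀ x ∈ Set.Ioi (0:ℝ), Z (r + 1) x = g (Z r x) := fun r x hx => by
    rw [← (hZ r x hx).1, ← EaOdd.eq_Ea (hZ r x hx).2.le]
    exact ((EaOdd.orderIso hα).symm_apply_apply _).symm
  induction r with
  | zero =>
    simpa using (hasDerivAt_id' z).congr_of_eventuallyEq
      (eventually_of_mem (Ioi_mem_nhds hz) hZ0)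
  | succ r ih =>
    have hpos : 0 < Z r z := by
      cases r with
      | zero => simpa [hZ0 z hz] using hz
      | succ r => exact (hZ r z hz).2
    have hg := EaOdd.hasDerivAt_orderIso_symm hα hpos
    rw [← hZg r z hz] at hg
    rw [prod_range_succ, mul_comm]
    exact (hg.comp z ih).congr_of_eventuallyEq (eventually_of_mem (Ioi_mem_nhds hz) (hZg r))

lemma inv_rpow_le_inv_rpow_Ea_add {α t : ℝ} (hα0 : 0 ≤ α) (hα1 : α ≤ 1) (ht : 0 < t) :
    (t ^ α)⁻¹ ≤ (Ea α t ^ α)⁻¹ + α * 2 ^ α := by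
  set v := t ^ α
  have hv : 0 < v := rpow_pos_of_pos ht α
  have hbern : (1 + 2 ^ α * v) ^ α ≤ 1 + α * 2 ^ α * v := by
    simpa [mul_assoc] using rpow_one_add_le_one_add_mul_self (s := 2 ^ α * v) (by
      have : 0 ≤ 2 ^ α * v := by positivity
      linarith) hα0 hα1
  have hEa : Ea α t ^ α ≤ v * (1 + α * 2 ^ α * v) := by
    rw [Ea, mul_rpow ht.le (by positivity)]
    exact mul_le_mul_of_nonneg_left hbern hv.le
  have hgap : v⁻¹ - α * 2 ^ α ≤ (v * (1 + α * 2 ^ α * v))⁻¹ := by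
    have hdiff : (v * (1 + α * 2 ^ α * v))⁻¹ - (v⁻¹ - α * 2 ^ α)
        = (α * 2 ^ α) ^ 2 * v / (1 + α * 2 ^ α * v) := by
      field_simp
      ring
    have : 0 ≤ (α * 2 ^ α) ^ 2 * v / (1 + α * 2 ^ α * v) := by positivity
    linarith
  have := inv_anti₀ (rpow_pos_of_pos (by unfold Ea; positivity) α) hEa
  linarith

lemma inv_rpow_le_of_Ea_orbit {α : ℝ} (hα0 : 0 ≤ α) (hα1 : α ≤ 1) {w : ℕ → ℝ}
    (hw : ∀ j, Ea α (w (j + 1)) = w j) (hpos : ∀ j, 0 < w j) (j : ℕ) :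
    (w j ^ α)⁻¹ ≤ (w 0 ^ α)⁻¹ + α * 2 ^ α * j := by
  induction j with
  | zero => simp
  | succ j ih =>
    have := inv_rpow_le_inv_rpow_Ea_add hα0 hα1 (hpos (j + 1))
    rw [hw] at this
    push_cast
    linarith

lemma le_mul_Ea'_of_Ea_orbit {α : ℝ} (hα0 : 0 ≤ α) (hα1 : α ≤ 1) {w : ℕ → ℝ}
    (hw : ∀ j, Ea α (w (j + 1)) = w j) (hpos : ∀ j, 0 < w j) (j : ℕ) :
    1 + α * 2 ^ α * (j + 2) * w 0 ^ α ≤ (1 + α * 2 ^ α * j * w 0 ^ α) * Ea' α (w j) := by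
  have hdrift := inv_rpow_le_of_Ea_orbit hα0 hα1 hw hpos j
  set c := α * 2 ^ α
  set u := w 0 ^ α
  have hu : 0 < u := rpow_pos_of_pos (hpos 0) α
  have hwj : 0 < w j ^ α := rpow_pos_of_pos (hpos j) α
  replace hdrift : u ≤ (1 + c * j * u) * w j ^ α := by
    have hmul := mul_le_mul_of_nonneg_left hdrift (mul_pos hu hwj).le
    field_simp at hmul
    linarith
  have h2 : 2 * α * 2 ^ α * u ≤ (α + 1) * 2 ^ α * ((1 + c * j * u) * w j ^ α) := by
    gcongr
    linarith
  rw [Ea']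
  nlinarith

lemma mul_mul_prod_inv_le {a D : ℕ → ℝ} (ha : ∀ j, 0 < a j) (hD : ∀ j, 0 < D j)
    (had : ∀ j, a (j + 2) ≤ a j * D j) (n : ℕ) :
    a (n + 1) * a (n + 2) * ∏ j ∈ range n, (D (j + 1))⁻¹ ≤ a 1 * a 2 := by
  induction n with
  | zero => simp
  | succ n ih =>
    have hP : 0 ≤ ∏ j ∈ range n, (D (j + 1))⁻¹ :=
      prod_nonneg fun j _ => (inv_pos.2 (hD (j + 1))).le
    have hstep : a (n + 3) * (D (n + 1))⁻¹ ≤ a (n + 1) := by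
      rw [← div_eq_mul_inv, div_le_iff₀ (hD _)]
      exact had (n + 1)
    calc a (n + 1 + 1) * a (n + 1 + 2) * ∏ j ∈ range (n + 1), (D (j + 1))⁻¹
        = a (n + 2) * (a (n + 3) * (D (n + 1))⁻¹) * ∏ j ∈ range n, (D (j + 1))⁻¹ := by
          rw [prod_range_succ]; ring
      _ ≤ a (n + 2) * a (n + 1) * ∏ j ∈ range n, (D (j + 1))⁻¹ := by
          gcongr
          exact (ha _).le
      _ ≤ a 1 * a 2 := by linarith

lemma sum_range_inv_mul_le_of_arith {a : ℕ → ℝ} {d : ℝ} (ha : ∀ n, 0 < a n) (hd : 0 < d)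
    (hstep : ∀ n, a (n + 1) = a n + d) (N : ℕ) :
    ∑ n ∈ range N, (a n * a (n + 1))⁻¹ ≤ (a 0 * d)⁻¹ := by
  have hterm (n : ℕ) : (a n * a (n + 1))⁻¹ = d⁻¹ * ((a n)⁻¹ - (a (n + 1))⁻¹) := by
    have := ha n
    have := ha (n + 1)
    rw [hstep] at *
    field_simp
    ring
  rw [sum_congr rfl fun n _ => hterm n, ← mul_sum, sum_range_sub', mul_inv, mul_comm]
  have := ha N
  gcongr
  exact sub_le_self _ (inv_pos.2 (ha N)).le

lemma sum_prod_inv_Ea'_le_of_Ea_orbit {α : ℝ} (hα0 : 0 < α) (hα1 : α ≤ 1) {w : ℕ → ℝ}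
    (hw : ∀ j, Ea α (w (j + 1)) = w j) (hpos : ∀ j, 0 < w j) (N : ℕ) :
    ∑ r ∈ range N, ∏ j ∈ range (r + 1), (Ea' α (w (j + 1)))⁻¹
      ≤ 1 + (α * 2 ^ α * w 0 ^ α)⁻¹ := by
  set c := α * 2 ^ α
  set u := w 0 ^ α
  have hc : 0 < c := by positivity
  have hu : 0 < u := rpow_pos_of_pos (hpos 0) α
  have hcu : 0 < c * u := mul_pos hc hu
  set a : ℕ → ℝ := fun j => 1 + c * j * u
  have ha (j : ℕ) : 0 < a j := by positivity
  have had (j : ℕ) : a (j + 2) ≤ a j * Ea' α (w j) := by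
    simpa [a, add_comm] using le_mul_Ea'_of_Ea_orbit hα0.le hα1 hw hpos j
  have hterm (r : ℕ) :
      ∏ j ∈ range (r + 1), (Ea' α (w (j + 1)))⁻¹ ≤ a 1 * a 2 * (a (r + 2) * a (r + 3))⁻¹ := by
    rw [← div_eq_mul_inv, le_div_iff₀ (mul_pos (ha _) (ha _)), mul_comm]
    exact mul_mul_prod_inv_le ha (fun j => Ea'_pos hα0.le (hpos j)) had (r + 1)
  calc ∑ r ∈ range N, ∏ j ∈ range (r + 1), (Ea' α (w (j + 1)))⁻¹
      ≤ ∑ r ∈ range N, a 1 * a 2 * (a (r + 2) * a (r + 3))⁻¹ := sum_le_sum fun r _ => hterm r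
    _ ≤ a 1 * a 2 * (a 2 * (c * u))⁻¹ := by
        rw [← mul_sum]
        gcongr
        have hstep (n : ℕ) : a (n + 1 + 2) = a (n + 2) + c * u := by
          simp only [a]; push_cast; ring
        exact sum_range_inv_mul_le_of_arith (a := fun n => a (n + 2)) (fun n => ha _) hcu hstep N
    _ = 1 + (c * u)⁻¹ := by
        have := ha 2
        simp only [a]
        field_simp
        push_cast
        ring

lemma one_add_inv_le_div_mul_rpow_neg {αm α z : ℝ} (hαm0 : 0 < αm) (hαm : αm ≤ α) (hα1 : α ≤ 1)
    (hz0 : 0 < z) (hz1 : z ≤ 1) :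
    1 + (α * 2 ^ α * z ^ α)⁻¹ ≤ 3 / αm * z ^ (-α) := by
  have hα0 : 0 ≤ α := hαm0.le.trans hαm
  have hu0 : 0 < z ^ α := rpow_pos_of_pos hz0 α
  have hv0 : 0 < αm * z ^ α := mul_pos hαm0 hu0
  have hv : αm * z ^ α ≤ α * 2 ^ α * z ^ α := by
    gcongr
    exact hαm.trans (le_mul_of_one_le_right hα0 (one_le_rpow one_le_two hα0))
  have hv2 : α * 2 ^ α * z ^ α ≤ 2 := by
    have h2 : (2 : ℝ) ^ α ≤ 2 := by simpa using rpow_le_rpow_of_exponent_le one_le_two hα1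
    have hu1 : z ^ α ≤ 1 := rpow_le_one hz0.le hz1 hα0
    calc α * 2 ^ α * z ^ α ≤ 1 * 2 * 1 := by gcongr
      _ = 2 := by norm_num
  have hone : 1 ≤ 2 * (α * 2 ^ α * z ^ α)⁻¹ := by
    rw [← div_eq_mul_inv, one_le_div (hv0.trans_le hv)]
    exact hv2
  calc 1 + (α * 2 ^ α * z ^ α)⁻¹ ≤ 3 * (α * 2 ^ α * z ^ α)⁻¹ := by linarith
    _ ≤ 3 * (αm * z ^ α)⁻¹ := by gcongr
    _ = 3 / αm * z ^ (-α) := by rw [rpow_neg hz0.le, mul_inv, ← mul_assoc, div_eq_mul_inv]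

theorem stmt19_general (αm αp : ℝ) (h1 : 0 < αm) (h3 : αp < 1) :
    ∃ C : ℝ, 0 < C ∧
      ∀ α ∈ Set.Icc αm αp, ∀ Z : ℕ → ℝ → ℝ,
        (∀ x ∈ Set.Ioi (0:ℝ), Z 0 x = x) →
        (∀ r : ℕ, ∀ x ∈ Set.Ioi (0:ℝ), Ea α (Z (r + 1) x) = Z r x ∧ 0 < Z (r + 1) x) →
        (∀ r : ℕ, ∀ x ∈ Set.Ioc (0:ℝ) 1, Z (r + 1) x ≤ 1/2) →
        ∀ z ∈ Set.Ioc (0:ℝ) 1,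
          Summable (fun r : ℕ => deriv (Z (r + 1)) z) ∧
          0 ≤ ∑' r : ℕ, deriv (Z (r + 1)) z ∧
          ∑' r : ℕ, deriv (Z (r + 1)) z ≤ C * z ^ (-α) := by
  refine ⟨3 / αm, by positivity, ?_⟩
  rintro α ⟨hαm, hαp⟩ Z hZ0 hZ - z ⟨hz0, hz1⟩
  have hα0 : 0 < α := h1.trans_le hαm
  have hα1 : α ≤ 1 := (hαp.trans_lt h3).le
  have hpos : ∀ j, 0 < Z j z
    | 0 => by rwa [hZ0 z hz0]
    | j + 1 => (hZ j z hz0).2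
  have hderiv (r : ℕ) :
      deriv (Z (r + 1)) z = ∏ j ∈ range (r + 1), (Ea' α (Z (j + 1) z))⁻¹ :=
    (hasDerivAt_Ea_inverse_iterate hα0.le hZ0 hZ hz0 (r + 1)).deriv
  have hnonneg (r : ℕ) : 0 ≤ deriv (Z (r + 1)) z := by
    rw [hderiv]
    exact prod_nonneg fun j _ => (inv_pos.2 (Ea'_pos hα0.le (hpos (j + 1)))).le
  have hsum (N : ℕ) : ∑ r ∈ range N, deriv (Z (r + 1)) z ≤ 3 / αm * z ^ (-α) := by
    have h := sum_prod_inv_Ea'_le_of_Ea_orbit hα0 hα1 (fun j => (hZ j z hz0).1) hpos N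
    rw [hZ0 z hz0] at h
    simp_rw [hderiv]
    exact h.trans (one_add_inv_le_div_mul_rpow_neg h1 hαm hα1 hz0 hz1)
  exact ⟨summable_of_sum_range_le hnonneg hsum, tsum_nonneg hnonneg,
    Real.tsum_le_of_sum_range_le hnonneg hsum⟩

theorem stmt19 (αm αp : ℝ) (h1 : 0 < αm) (h2 : αm ≤ αp) (h3 : αp < 1) :
    ∃ C : ℝ, 0 < C ∧
      ∀ α ∈ Set.Icc αm αp, ∀ Z : ℕ → ℝ → ℝ,
        (∀ x ∈ Set.Ioi (0:ℝ), Z 0 x = x) →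
        (∀ r : ℕ, ∀ x ∈ Set.Ioi (0:ℝ), Ea α (Z (r + 1) x) = Z r x ∧ 0 < Z (r + 1) x) →
        (∀ r : ℕ, ∀ x ∈ Set.Ioc (0:ℝ) 1, Z (r + 1) x ≤ 1/2) →
        ∀ z ∈ Set.Ioc (0:ℝ) 1,
          Summable (fun r : ℕ => deriv (Z (r + 1)) z) ∧
          0 ≤ ∑' r : ℕ, deriv (Z (r + 1)) z ∧
          ∑' r : ℕ, deriv (Z (r + 1)) z ≤ C * z ^ (-α) :=
  stmt19_general αm αp h1 h3
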